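/- arXiv:2401.03050 — 3 statements merged into one kernel-verified Lean document; each statement's English description precedes it below -/
import Mathlib

section
/- Let X be a perfect compact metrizable space and let a finitely generated group Γ act on X by homeomorphisms as a convergence group. Suppose ρ : Γ → GL_d(ℝ) is a homomorphism and ξ : X → ℙ(ℝ^d) is a continuous non-constant map that is ρ-equivariant: ξ(γ·x) = [ρ(γ)v] whenever v spans ξ(x). Then the normalized representation ρ̂ : Γ → GL_d(ℝ), defined by ρ̂(γ) = |det ρ(γ)|^{−1/d} ρ(γ), has finite kernel and discrete image; in particular, ρ itself has finite kernel and ρ(Γ) is a discrete subgroup of GL_d(ℝ). -/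
open Filter Topology Matrix

noncomputable instance projectivizationTopology
    {K V : Type*} [DivisionRing K] [AddCommGroup V] [Module K V] [TopologicalSpace V] :
    TopologicalSpace (Projectivization K V) :=
  inferInstanceAs (TopologicalSpace (Quotient _))

/-- `g n • z → a` locally uniformly on `M ∖ {b}`. -/
def ConvLocUnif {Γ M : Type} [SMul Γ M] [TopologicalSpace M]
    (g : ℕ → Γ) (a b : M) : Prop :=
  ∀ K : Set M, IsCompact K → b ∉ K →
    ∀ U ∈ 𝓝 a, ∀ᶠ n in atTop, ∀ z ∈ K, g n • z ∈ U

/-- The action of `Γ` on `M` is an action by homeomorphisms with the convergence property. -/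
def IsConvergenceAction (Γ M : Type) [Group Γ] [TopologicalSpace M] [MulAction Γ M] : Prop :=
  (∀ γ : Γ, Continuous fun x : M => γ • x) ∧
  ∀ g : ℕ → Γ, Function.Injective g →
    ∃ φ : ℕ → ℕ, StrictMono φ ∧ ∃ a b : M, ConvLocUnif (fun n => g (φ n)) a b

namespace DiscreteObs

variable {d : ℕ}

/-- The scale-invariant "projection matrix" attached to a vector. -/
noncomputable def fP (w : Fin d → ℝ) : Matrix (Fin d) (Fin d) ℝ :=
  (w ⬝ᵥ w)⁻¹ • Matrix.vecMulVec w w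

lemma dot_self_pos {w : Fin d → ℝ} (hw : w ≠ 0) : 0 < w ⬝ᵥ w := by
  rcases (Finset.sum_nonneg fun i _ => mul_self_nonneg (w i)).lt_or_eq with h | h
  · exact h
  · exact absurd (dotProduct_self_eq_zero.mp h.symm) hw

lemma fP_smul {k : ℝ} (hk : k ≠ 0) (w : Fin d → ℝ) : fP (k • w) = fP w := by
  rcases eq_or_ne w 0 with rfl | hw
  · simp
  · have hd0 : w ⬝ᵥ w ≠ 0 := (dot_self_pos hw).ne'
    have h1 : (k • w) ⬝ᵥ (k • w) = k * k * (w ⬝ᵥ w) := by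
      rw [smul_dotProduct, dotProduct_smul, smul_eq_mul, smul_eq_mul]; ring
    have h2 : Matrix.vecMulVec (k • w) (k • w) = (k * k) • Matrix.vecMulVec w w := by
      ext i j
      simp [Matrix.vecMulVec_apply, Pi.smul_apply, smul_eq_mul]
      ring
    unfold fP
    rw [h1, h2, smul_smul]
    congr 1
    field_simp

lemma fP_mulVec (w v : Fin d → ℝ) : fP w *ᵥ v = ((w ⬝ᵥ w)⁻¹ * (w ⬝ᵥ v)) • w := by
  funext i
  simp only [fP, Matrix.mulVec, dotProduct, Matrix.smul_apply, Matrix.vecMulVec_apply,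
    smul_eq_mul, Pi.smul_apply]
  rw [Finset.mul_sum, Finset.sum_mul]
  exact Finset.sum_congr rfl fun j _ => by ring

lemma fP_self {w : Fin d → ℝ} (hw : w ≠ 0) : fP w *ᵥ w = w := by
  rw [fP_mulVec, inv_mul_cancel₀ (dot_self_pos hw).ne', one_smul]

lemma fP_inj {v u : Fin d → ℝ} (hv : v ≠ 0) (h : fP v = fP u) :
    ∃ k : ℝ, k ≠ 0 ∧ v = k • u := by
  have h1 : v = ((u ⬝ᵥ u)⁻¹ * (u ⬝ᵥ v)) • u := by
    conv_lhs => rw [← fP_self hv, h, fP_mulVec]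
  refine ⟨_, fun hk => hv ?_, h1⟩
  rw [h1, hk, zero_smul]

lemma fP_continuousAt {w : Fin d → ℝ} (hw : w ≠ 0) : ContinuousAt fP w := by
  have h1 : Continuous fun w : Fin d → ℝ => w ⬝ᵥ w :=
    continuous_id.dotProduct continuous_id
  have h2 : Continuous fun w : Fin d → ℝ => Matrix.vecMulVec w w :=
    continuous_id.matrix_vecMulVec continuous_id
  exact (h1.continuousAt.inv₀ (dot_self_pos hw).ne').smul h2.continuousAt

/-- `fP` descended to projective space. -/
noncomputable def FP : Projectivization ℝ (Fin d → ℝ) → Matrix (Fin d) (Fin d) ℝ :=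
  Projectivization.lift (fun w => fP w.1) (by
    intro a b t h
    have ht : t ≠ 0 := fun h0 => a.2 (by rw [h, h0, zero_smul])
    show fP a.1 = fP b.1
    rw [h]
    exact fP_smul ht _)

lemma FP_mk (v : Fin d → ℝ) (hv : v ≠ 0) : FP (Projectivization.mk ℝ v hv) = fP v := rfl

lemma FP_inj : Function.Injective (FP (d := d)) := by
  intro p q h
  induction p using Projectivization.ind with | h v hv =>
  induction q using Projectivization.ind with | h u hu =>
  rw [FP_mk, FP_mk] at h
  obtain ⟨k, hk, hvk⟩ := fP_inj hv h
  rw [Projectivization.mk_eq_mk_iff']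
  exact ⟨k, hvk.symm⟩

lemma FP_cont : Continuous (FP (d := d)) := by
  have hws : Continuous fun w : {v : Fin d → ℝ // v ≠ 0} => fP w.1 :=
    continuous_iff_continuousAt.2 fun w => (fP_continuousAt w.2).comp continuousAt_subtype_val
  exact continuous_quot_lift _ hws

lemma unit_mulVec_ne_zero (u : GL (Fin d) ℝ) {w : Fin d → ℝ} (hw : w ≠ 0) :
    (u : Matrix (Fin d) (Fin d) ℝ) *ᵥ w ≠ 0 := by
  intro h0
  apply hw
  have : (↑u⁻¹ : Matrix (Fin d) (Fin d) ℝ) *ᵥ ((u : Matrix (Fin d) (Fin d) ℝ) *ᵥ w) = w := by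
    rw [Matrix.mulVec_mulVec, u.inv_mul, Matrix.one_mulVec]
  rw [← this, h0, Matrix.mulVec_zero]

lemma unit_mulVec_inj (u : GL (Fin d) ℝ) {w₁ w₂ : Fin d → ℝ}
    (h : (u : Matrix (Fin d) (Fin d) ℝ) *ᵥ w₁ = (u : Matrix (Fin d) (Fin d) ℝ) *ᵥ w₂) :
    w₁ = w₂ := by
  have h3 : ∀ w : Fin d → ℝ,
      (↑u⁻¹ : Matrix (Fin d) (Fin d) ℝ) *ᵥ ((u : Matrix (Fin d) (Fin d) ℝ) *ᵥ w) = w := fun w => by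
    rw [Matrix.mulVec_mulVec, u.inv_mul, Matrix.one_mulVec]
  rw [← h3 w₁, h, h3]

end DiscreteObs

namespace DiscreteObs

lemma keyA {Γ X : Type} [Group Γ] [TopologicalSpace X] [MulAction Γ X]
    (hperf : ∀ x : X, Filter.NeBot (𝓝[≠] x))
    (hconv : IsConvergenceAction Γ X)
    {d : ℕ}
    (ρ : Γ →* GL (Fin d) ℝ)
    (ξ : X → Projectivization ℝ (Fin d → ℝ))
    (hcont : Continuous ξ)
    (hnonconst : ∃ x y : X, ξ x ≠ ξ y)
    (hequiv : ∀ (γ : Γ) (x : X) (v : Fin d → ℝ) (hv : v ≠ 0)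
      (hgv : (ρ γ : Matrix (Fin d) (Fin d) ℝ) *ᵥ v ≠ 0),
      ξ x = Projectivization.mk ℝ v hv →
      ξ (γ • x) = Projectivization.mk ℝ ((ρ γ : Matrix (Fin d) (Fin d) ℝ) *ᵥ v) hgv)
    (g : ℕ → Γ) (hg : Function.Injective g)
    (c : ℕ → ℝ) (hc : ∀ n, c n ≠ 0)
    (h : GL (Fin d) ℝ)
    (hlim : Tendsto (fun n => c n • ((ρ (g n) : Matrix (Fin d) (Fin d) ℝ))) atTop
      (𝓝 (h : Matrix (Fin d) (Fin d) ℝ))) :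
    False := by
  obtain ⟨φ, hφ, a, b, hcl⟩ := hconv.2 g hg
  have main : ∀ x : X, x ≠ b →
      FP (ξ a) = fP ((h : Matrix (Fin d) (Fin d) ℝ) *ᵥ (ξ x).rep) := by
    intro x hx
    set v := (ξ x).rep with hvdef
    have hv0 : v ≠ 0 := (ξ x).rep_nonzero
    have htend : Tendsto (fun n => g (φ n) • x) atTop (𝓝 a) := by
      rw [Filter.tendsto_def]
      intro U hU
      have hev := hcl {x} isCompact_singleton (by simpa using (Ne.symm hx)) U hU
      exact hev.mono fun n hn => hn x rfl
    have hstep : ∀ n, FP (ξ (g (φ n) • x)) =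
        fP ((c (φ n) • (ρ (g (φ n)) : Matrix (Fin d) (Fin d) ℝ)) *ᵥ v) := by
      intro n
      rw [hequiv (g (φ n)) x v hv0 (unit_mulVec_ne_zero _ hv0)
        (Projectivization.mk_rep (ξ x)).symm, FP_mk, Matrix.smul_mulVec,
        fP_smul (hc (φ n))]
    have l1 : Tendsto (fun n => FP (ξ (g (φ n) • x))) atTop (𝓝 (FP (ξ a))) :=
      ((FP_cont.comp hcont).tendsto a).comp htend
    have lmat : Tendsto (fun n => c (φ n) • (ρ (g (φ n)) : Matrix (Fin d) (Fin d) ℝ)) atTop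
        (𝓝 (h : Matrix (Fin d) (Fin d) ℝ)) := hlim.comp hφ.tendsto_atTop
    have l2 : Tendsto (fun n => (c (φ n) • (ρ (g (φ n)) : Matrix (Fin d) (Fin d) ℝ)) *ᵥ v) atTop
        (𝓝 ((h : Matrix (Fin d) (Fin d) ℝ) *ᵥ v)) :=
      ((continuous_id.matrix_mulVec continuous_const).tendsto _).comp lmat
    have l3 : Tendsto (fun n => fP ((c (φ n) • (ρ (g (φ n)) : Matrix (Fin d) (Fin d) ℝ)) *ᵥ v))
        atTop (𝓝 (fP ((h : Matrix (Fin d) (Fin d) ℝ) *ᵥ v))) :=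
      (fP_continuousAt (unit_mulVec_ne_zero h hv0)).tendsto.comp l2
    simp only [hstep] at l1
    exact tendsto_nhds_unique l1 l3
  -- produce two points different under ξ, both ≠ b
  have helper : ∀ q : X, ξ b ≠ ξ q → ∃ x : X, x ≠ b ∧ ξ x ≠ ξ q := by
    intro q hq
    have hopen : IsOpen {z : X | FP (ξ z) ≠ FP (ξ q)} :=
      (isClosed_singleton.isOpen_compl).preimage (FP_cont.comp hcont)
    have hbmem : b ∈ {z : X | FP (ξ z) ≠ FP (ξ q)} := fun he => hq (FP_inj he)
    have hmem : {z : X | FP (ξ z) ≠ FP (ξ q)} ∈ 𝓝[≠] b :=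
      mem_nhdsWithin_of_mem_nhds (hopen.mem_nhds hbmem)
    haveI := hperf b
    obtain ⟨x, hx1, hx2⟩ := Filter.nonempty_of_mem (Filter.inter_mem hmem self_mem_nhdsWithin)
    exact ⟨x, hx2, fun he => hx1 (by rw [he])⟩
  obtain ⟨x, y, hxb, hyb, hxy⟩ : ∃ x y : X, x ≠ b ∧ y ≠ b ∧ ξ x ≠ ξ y := by
    obtain ⟨x₀, y₀, hne⟩ := hnonconst
    rcases eq_or_ne x₀ b with rfl | hxb
    · obtain ⟨x, hx1, hx2⟩ := helper y₀ hne
      exact ⟨x, y₀, hx1, fun he => hne (by rw [he]), hx2⟩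
    · rcases eq_or_ne y₀ b with rfl | hyb
      · obtain ⟨y, hy1, hy2⟩ := helper x₀ (Ne.symm hne)
        exact ⟨x₀, y, hxb, hy1, fun he => hy2 (by rw [he])⟩
      · exact ⟨x₀, y₀, hxb, hyb, hne⟩
  obtain ⟨k, hk, hkeq⟩ := fP_inj (unit_mulVec_ne_zero h (ξ x).rep_nonzero)
    ((main x hxb).symm.trans (main y hyb))
  apply hxy
  have hrep : (ξ x).rep = k • (ξ y).rep := by
    apply unit_mulVec_inj h
    rw [hkeq, Matrix.mulVec_smul]
  rw [← Projectivization.mk_rep (ξ x), ← Projectivization.mk_rep (ξ y),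
    Projectivization.mk_eq_mk_iff']
  exact ⟨k, hrep.symm⟩

end DiscreteObs

namespace DiscreteObs

lemma glMetrizable (d : ℕ) : TopologicalSpace.MetrizableSpace (GL (Fin d) ℝ) := by
  haveI : TopologicalSpace.MetrizableSpace (Matrix (Fin d) (Fin d) ℝ) :=
    inferInstanceAs (TopologicalSpace.MetrizableSpace (Fin d → Fin d → ℝ))
  haveI : TopologicalSpace.MetrizableSpace ((Matrix (Fin d) (Fin d) ℝ)ᵐᵒᵖ) :=
    MulOpposite.opHomeomorph.symm.isEmbedding.metrizableSpace
  exact Units.isEmbedding_embedProduct.metrizableSpace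

lemma keyB {Γ X : Type} [Group Γ] [TopologicalSpace X] [MulAction Γ X]
    (hperf : ∀ x : X, Filter.NeBot (𝓝[≠] x))
    (hconv : IsConvergenceAction Γ X)
    {d : ℕ}
    (ρ : Γ →* GL (Fin d) ℝ)
    (ξ : X → Projectivization ℝ (Fin d → ℝ))
    (hcont : Continuous ξ)
    (hnonconst : ∃ x y : X, ξ x ≠ ξ y)
    (hequiv : ∀ (γ : Γ) (x : X) (v : Fin d → ℝ) (hv : v ≠ 0)
      (hgv : (ρ γ : Matrix (Fin d) (Fin d) ℝ) *ᵥ v ≠ 0),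
      ξ x = Projectivization.mk ℝ v hv →
      ξ (γ • x) = Projectivization.mk ℝ ((ρ γ : Matrix (Fin d) (Fin d) ℝ) *ᵥ v) hgv)
    (ρ' : Γ → GL (Fin d) ℝ) (c : Γ → ℝ) (hc : ∀ γ, c γ ≠ 0)
    (hρ' : ∀ γ, (ρ' γ : Matrix (Fin d) (Fin d) ℝ) = c γ • (ρ γ : Matrix (Fin d) (Fin d) ℝ)) :
    {γ : Γ | ρ' γ = 1}.Finite ∧ DiscreteTopology (Set.range ρ') := by
  constructor
  · by_contra hinf
    set e := Set.Infinite.natEmbedding _ hinf with he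
    refine keyA hperf hconv ρ ξ hcont hnonconst hequiv (fun n => (e n : Γ))
      (fun m n hmn => e.injective (Subtype.ext hmn)) (fun n => c (e n)) (fun n => hc _) 1 ?_
    have hfun : (fun n => c (e n : Γ) • ((ρ (e n : Γ) : Matrix (Fin d) (Fin d) ℝ))) =
        fun _ => ((1 : GL (Fin d) ℝ) : Matrix (Fin d) (Fin d) ℝ) := by
      funext n
      rw [← hρ', show ρ' (e n : Γ) = 1 from (e n).2]
    rw [hfun]
    exact tendsto_const_nhds
  · rw [discreteTopology_subtype_iff]
    intro x hx
    by_contra hne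
    haveI hnb : Filter.NeBot (𝓝[≠] x ⊓ 𝓟 (Set.range ρ')) := ⟨hne⟩
    haveI := glMetrizable d
    letI : MetricSpace (GL (Fin d) ℝ) := TopologicalSpace.metrizableSpaceMetric _
    have key : ∀ ε : ℝ, 0 < ε →
        ∃ u : GL (Fin d) ℝ, (u ∈ Set.range ρ' ∧ u ≠ x) ∧ dist u x < ε := by
      intro ε hε
      have hball : Metric.ball x ε ∈ 𝓝[≠] x ⊓ 𝓟 (Set.range ρ') :=
        Filter.mem_inf_of_left (mem_nhdsWithin_of_mem_nhds (Metric.ball_mem_nhds x hε))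
      have hcompl : {x}ᶜ ∈ 𝓝[≠] x ⊓ 𝓟 (Set.range ρ') :=
        Filter.mem_inf_of_left self_mem_nhdsWithin
      have hrange : Set.range ρ' ∈ 𝓝[≠] x ⊓ 𝓟 (Set.range ρ') :=
        Filter.mem_inf_of_right (Filter.mem_principal_self _)
      obtain ⟨u, ⟨hu1, hu2⟩, hu3⟩ :=
        Filter.nonempty_of_mem (Filter.inter_mem (Filter.inter_mem hball hcompl) hrange)
      exact ⟨u, ⟨hu3, hu2⟩, Metric.mem_ball.mp hu1⟩
    set T := {u : GL (Fin d) ℝ // u ∈ Set.range ρ' ∧ u ≠ x} with hT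
    have step : ∀ (t : T) (n : ℕ), ∃ t' : T,
        dist t'.1 x < min (dist t.1 x) ((1 : ℝ) / (n + 1)) := by
      intro t n
      have hpos : 0 < min (dist t.1 x) ((1 : ℝ) / (n + 1)) :=
        lt_min (dist_pos.2 t.2.2) (by positivity)
      obtain ⟨u, hu1, hu2⟩ := key _ hpos
      exact ⟨⟨u, hu1⟩, hu2⟩
    choose next hnext using step
    obtain ⟨u0, hu01, _⟩ := key 1 one_pos
    let u : ℕ → T := fun n => Nat.rec ⟨u0, hu01⟩ (fun n t => next t n) n
    have hsucc : ∀ n, u (n + 1) = next (u n) n := fun n => rfl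
    have hd1 : ∀ n, dist (u (n + 1)).1 x < dist (u n).1 x := fun n =>
      lt_of_lt_of_le (hsucc n ▸ hnext (u n) n) (min_le_left _ _)
    have hd2 : ∀ n, dist (u (n + 1)).1 x < (1 : ℝ) / (n + 1) := fun n =>
      lt_of_lt_of_le (hsucc n ▸ hnext (u n) n) (min_le_right _ _)
    have hanti : StrictAnti fun n => dist (u n).1 x := strictAnti_nat_of_succ_lt hd1
    have huinj : Function.Injective u := fun m n hmn => hanti.injective (by rw [hmn])
    have htend : Tendsto (fun n => (u n).1) atTop (𝓝 x) := by
      rw [tendsto_iff_dist_tendsto_zero]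
      apply squeeze_zero' (Filter.Eventually.of_forall fun n => dist_nonneg)
        (g := fun n : ℕ => (1 : ℝ) / n) ?_ tendsto_one_div_atTop_nhds_zero_nat
      rw [Filter.eventually_atTop]
      refine ⟨1, fun n hn => ?_⟩
      obtain ⟨m, rfl⟩ := Nat.exists_eq_add_of_le hn
      have h1m : 1 + m = m + 1 := add_comm 1 m
      rw [h1m]
      push_cast
      exact (hd2 m).le
    have hexg : ∀ n, ∃ γ : Γ, ρ' γ = (u n).1 := fun n => (u n).2.1
    choose g hg using hexg
    have hginj : Function.Injective g := by
      intro m n hmn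
      apply huinj
      apply Subtype.ext
      rw [← hg m, ← hg n, hmn]
    refine keyA hperf hconv ρ ξ hcont hnonconst hequiv g hginj (fun n => c (g n))
      (fun n => hc _) x ?_
    have hfun : (fun n => c (g n) • ((ρ (g n) : Matrix (Fin d) (Fin d) ℝ))) =
        fun n => (((u n).1 : GL (Fin d) ℝ) : Matrix (Fin d) (Fin d) ℝ) := by
      funext n
      rw [← hρ', hg]
    rw [hfun]
    exact (Units.continuous_val.tendsto x).comp htend

end DiscreteObs

/-- **Observation (equivariant maps force discreteness).**
Let `Γ` act as a convergence group on a perfect compact metrizable space `X`, let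
`ρ : Γ → GL_d(ℝ)` admit a continuous non-constant `ρ`-equivariant map `ξ : X → ℙ(ℝ^d)`.
Then any normalization `ρ̂(γ) = |det ρ(γ)|^{-1/d} ρ(γ)` has finite kernel and discrete image,
and in particular so does `ρ` itself. -/
theorem discrete_of_equivariant_nonconstant_map
    {Γ X : Type} [Group Γ] [TopologicalSpace X] [MulAction Γ X]
    [CompactSpace X] [TopologicalSpace.MetrizableSpace X]
    (hperf : ∀ x : X, Filter.NeBot (𝓝[≠] x))
    (hfg : Group.FG Γ)
    (hconv : IsConvergenceAction Γ X)
    {d : ℕ} (hd : 0 < d)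
    (ρ : Γ →* GL (Fin d) ℝ)
    (ξ : X → Projectivization ℝ (Fin d → ℝ))
    (hcont : Continuous ξ)
    (hnonconst : ∃ x y : X, ξ x ≠ ξ y)
    (hequiv : ∀ (γ : Γ) (x : X) (v : Fin d → ℝ) (hv : v ≠ 0)
      (hgv : (ρ γ : Matrix (Fin d) (Fin d) ℝ) *ᵥ v ≠ 0),
      ξ x = Projectivization.mk ℝ v hv →
      ξ (γ • x) = Projectivization.mk ℝ ((ρ γ : Matrix (Fin d) (Fin d) ℝ) *ᵥ v) hgv) :
    (∀ ρ' : Γ → GL (Fin d) ℝ,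
      (∀ γ : Γ, (ρ' γ : Matrix (Fin d) (Fin d) ℝ) =
        |((ρ γ : Matrix (Fin d) (Fin d) ℝ).det)| ^ (-(1 / (d : ℝ))) •
          (ρ γ : Matrix (Fin d) (Fin d) ℝ)) →
      {γ : Γ | ρ' γ = 1}.Finite ∧ DiscreteTopology (Set.range ρ')) ∧
    {γ : Γ | ρ γ = 1}.Finite ∧ DiscreteTopology (Set.range fun γ => ρ γ) := by
  have hdet : ∀ γ : Γ, ((ρ γ : Matrix (Fin d) (Fin d) ℝ).det) ≠ 0 := by
    intro γ
    have h1 : IsUnit ((ρ γ : Matrix (Fin d) (Fin d) ℝ)) := (ρ γ).isUnit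
    rw [Matrix.isUnit_iff_isUnit_det, isUnit_iff_ne_zero] at h1
    exact h1
  refine ⟨fun ρ' hρ'eq => DiscreteObs.keyB hperf hconv ρ ξ hcont hnonconst hequiv ρ'
    (fun γ => |((ρ γ : Matrix (Fin d) (Fin d) ℝ).det)| ^ (-(1 / (d : ℝ))))
    (fun γ => (Real.rpow_pos_of_pos (abs_pos.2 (hdet γ)) _).ne') hρ'eq,
    DiscreteObs.keyB hperf hconv ρ ξ hcont hnonconst hequiv (fun γ => ρ γ) (fun _ => 1)
    (fun _ => one_ne_zero) (fun γ => (one_smul ℝ _).symm)⟩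
end

section
/- Let Γ be a group and F a finite normal subgroup of Γ such that the quotient Γ/F is virtually nilpotent (has a finite-index nilpotent subgroup). Then Γ is virtually nilpotent: Γ has a finite-index nilpotent subgroup. -/
/-!
If `f : G →* Q` has finite kernel and `H ≤ Q` is nilpotent of finite index, intersect the
preimage of `H` with the centralizer of `ker f`. The centralizer has finite index because `G`
acts on the finite normal subgroup `ker f` by conjugation through the finite group
`MulAut (ker f)`. On the intersection, `f` is a central extension of a subgroup of `H`, and
central extensions of nilpotent groups are nilpotent.
-/

/-- A group is virtually nilpotent if it has a nilpotent subgroup of finite index. -/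
def IsVirtuallyNilpotent (G : Type*) [Group G] : Prop :=
  ∃ H : Subgroup G, H.FiniteIndex ∧ Group.IsNilpotent H

namespace Subgroup

variable {G : Type*} [Group G]

theorem ker_conjNormal (N : Subgroup G) [N.Normal] :
    (MulAut.conjNormal : G →* MulAut N).ker = centralizer (N : Set G) := by
  ext g
  simp only [MonoidHom.mem_ker, mem_centralizer_iff, MulEquiv.ext_iff, Subtype.ext_iff,
    MulAut.conjNormal_apply, MulAut.one_apply, Subtype.forall, SetLike.mem_coe]
  refine forall₂_congr fun h _ => ?_
  rw [mul_inv_eq_iff_eq_mul, eq_comm]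

instance finiteIndex_centralizer (N : Subgroup G) [N.Normal] [Finite N] :
    (centralizer (N : Set G)).FiniteIndex := by
  rw [← ker_conjNormal]
  have : Finite (MulAut N) := Finite.of_injective _ MulEquiv.toEquiv_injective
  exact finiteIndex_ker _

instance finiteIndex_comap {G' : Type*} [Group G'] (H : Subgroup G') [H.FiniteIndex]
    (f : G →* G') : (H.comap f).FiniteIndex :=
  have := H.isFiniteRelIndex_of_finiteIndex (K := f.range)
  ⟨index_comap H f ▸ relIndex_ne_zero⟩

end Subgroup

open Subgroup in
theorem IsVirtuallyNilpotent.of_finite_ker {G Q : Type*} [Group G] [Group Q] (f : G →* Q)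
    [Finite f.ker] (hQ : IsVirtuallyNilpotent Q) : IsVirtuallyNilpotent G := by
  obtain ⟨H, _, _⟩ := hQ
  let K := H.comap f ⊓ centralizer (f.ker : Set G)
  let fK : K →* H := (f.comp K.subtype).codRestrict H fun x => x.2.1
  refine ⟨K, inferInstance, Subgroup.isNilpotent_of_ker_le_center fK fun x hx => ?_⟩
  have hx : (x : G) ∈ f.ker := congrArg Subtype.val hx
  exact mem_center_iff.mpr fun y => Subtype.ext (mem_centralizer_iff.mp y.2.2 x hx).symm

/-- **Proposition (finite extensions of virtually nilpotent groups are virtually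
nilpotent).** If `F` is a finite normal subgroup of `Γ` and `Γ/F` is virtually nilpotent,
then `Γ` is virtually nilpotent. -/
theorem virtually_nilpotent_of_finite_extension
    {Γ : Type} [Group Γ] (F : Subgroup Γ) [F.Normal] (hF : Finite F)
    (h : IsVirtuallyNilpotent (Γ ⧸ F)) : IsVirtuallyNilpotent Γ := by
  have : Finite (QuotientGroup.mk' F).ker := by rwa [QuotientGroup.ker_mk']
  exact h.of_finite_ker (QuotientGroup.mk' F)
end

section
/- Let G be a subgroup of GL_d(ℝ) and let C ⊆ ℝ^d be a compact connected set whose linear span is all of ℝ^d and which is contained in an affine chart: there is a linear functional φ : ℝ^d → ℝ with φ(v) = 1 for all v ∈ C. Suppose G preserves C projectively: for every g ∈ G, the set ℝ* · C = {t·v : t ∈ ℝ ∖ {0}, v ∈ C} satisfies g · (ℝ* · C) = ℝ* · C. Then G preserves a properly convex open domain in ℙ(ℝ^d): there exists a nonempty open convex cone Ω ⊆ ℝ^d with tΩ = Ω for all t > 0 and with Ω̄ ∩ (−Ω̄) = {0}, such that for every g ∈ G either g·Ω = Ω or g·Ω = −Ω. -/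
/-!
Let `P = Ioi 0 • C` be the open cone over `C` and take `Ω` to be the interior of its convex
hull. Since `C` spans, `Ω` is nonempty; since `φ = 1` on the bounded set `C`, the closure of `Ω`
lies in `{x | ‖x‖ ≤ M φ x}`, which meets its negative only at `0`. The saturation of `C` is
`P ∪ -P`, and the sign of `φ` separates `P` from `-P`. For `g ∈ G` the connected set `g C` lies in
`P ∪ -P`, hence in one of them, so `g P ⊆ ±P`; disjointness upgrades this to `g P = ±P`, and so
`g Ω = ±Ω`.
-/

open Matrix Pointwise

/-- The set of nonzero scalar multiples of elements of `C`. -/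
def scalarSaturation {d : ℕ} (C : Set (Fin d → ℝ)) : Set (Fin d → ℝ) :=
  {w | ∃ t : ℝ, t ≠ 0 ∧ ∃ v ∈ C, w = t • v}

open Set Filter Topology

section Module

variable {E : Type*} [AddCommGroup E]

theorem image_eq_of_image_union_neg_eq {F : Type*} [FunLike F E E] [AddMonoidHomClass F E E]
    {P Q : Set E} (hQ : Disjoint Q (-Q)) (f : F)
    (hf : f '' (P ∪ -P) = Q ∪ -Q) (hsub : f '' P ⊆ Q) : f '' P = Q := by
  refine hsub.antisymm fun x hx => ?_
  obtain ⟨y, hy | hy, rfl⟩ : x ∈ f '' (P ∪ -P) := hf.symm ▸ Or.inl hx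
  · exact mem_image_of_mem f hy
  · have hneg : -f y ∈ Q := by simpa using hsub (mem_image_of_mem f hy)
    exact (disjoint_left.1 hQ hx (by simpa using hneg)).elim

variable [Module ℝ E]

theorem smul_Ioi_smul_eq {t : ℝ} (ht : 0 < t) (C : Set E) :
    t • (Ioi (0 : ℝ) • C) = Ioi (0 : ℝ) • C := by
  rw [← smul_assoc, LinearOrderedField.smul_Ioi ht, mul_zero]

theorem image_Ioi_smul_subset {F : Type*} [FunLike F E E] [LinearMapClass F ℝ E E] {C D : Set E}
    (f : F) (h : f '' C ⊆ Ioi (0 : ℝ) • D) :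
    f '' (Ioi (0 : ℝ) • C) ⊆ Ioi (0 : ℝ) • D := by
  rintro _ ⟨_, ⟨t, ht, v, hv, rfl⟩, rfl⟩
  rw [map_smul, ← smul_Ioi_smul_eq ht D]
  exact smul_mem_smul_set (h (mem_image_of_mem f hv))

theorem pos_of_mem_Ioi_smul {C : Set E} {φ : E →ₗ[ℝ] ℝ} (hφ : ∀ v ∈ C, φ v = 1) {x : E}
    (hx : x ∈ Ioi (0 : ℝ) • C) : 0 < φ x := by
  obtain ⟨t, ht, v, hv, rfl⟩ := hx
  simpa [hφ v hv] using ht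

theorem neg_of_mem_neg_Ioi_smul {C : Set E} {φ : E →ₗ[ℝ] ℝ} (hφ : ∀ v ∈ C, φ v = 1) {x : E}
    (hx : x ∈ -(Ioi (0 : ℝ) • C)) : φ x < 0 := by
  simpa using pos_of_mem_Ioi_smul hφ hx

theorem vectorSpan_Ioi_smul_eq_top {C : Set E} (hC : Submodule.span ℝ C = ⊤) :
    vectorSpan ℝ (Ioi (0 : ℝ) • C) = ⊤ := by
  refine eq_top_iff.2 (hC ▸ Submodule.span_le.2 fun v hv => ?_)
  have h := vsub_mem_vectorSpan ℝ (smul_mem_smul (show (2 : ℝ) ∈ Ioi 0 by norm_num) hv)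
    (smul_mem_smul (show (1 : ℝ) ∈ Ioi 0 by norm_num) hv)
  rwa [vsub_eq_sub, ← sub_smul, show (2 : ℝ) - 1 = 1 by norm_num, one_smul] at h

end Module

theorem interior_neg {E : Type*} [TopologicalSpace E] [InvolutiveNeg E] [ContinuousNeg E]
    (s : Set E) : interior (-s) = -interior s := by
  simpa only [Homeomorph.coe_neg, Set.neg_preimage] using
    ((Homeomorph.neg E).preimage_interior s).symm

section TopologicalVectorSpace

variable {E : Type*} [AddCommGroup E] [Module ℝ E] [TopologicalSpace E]

theorem subset_or_subset_neg_of_subset_union_neg {C T : Set E} {φ : E →ₗ[ℝ] ℝ}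
    (hφc : Continuous φ) (hφ : ∀ v ∈ C, φ v = 1) (hT : IsPreconnected T)
    (hTP : T ⊆ Ioi (0 : ℝ) • C ∪ -(Ioi (0 : ℝ) • C)) :
    T ⊆ Ioi (0 : ℝ) • C ∨ T ⊆ -(Ioi (0 : ℝ) • C) := by
  have hsign : T ⊆ {x | 0 < φ x} ∨ T ⊆ {x | φ x < 0} :=
    hT.subset_or_subset (isOpen_lt continuous_const hφc) (isOpen_lt hφc continuous_const)
      (disjoint_left.2 fun _ hpos hneg => lt_asymm (show 0 < φ _ from hpos) hneg)
      fun x hx => (hTP hx).imp (pos_of_mem_Ioi_smul hφ) (neg_of_mem_neg_Ioi_smul hφ)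
  refine hsign.imp (fun h x hx => ?_) (fun h x hx => ?_) <;> rcases hTP hx with hP | hN
  · exact hP
  · exact absurd (h hx) (lt_asymm (neg_of_mem_neg_Ioi_smul hφ hN))
  · exact absurd (h hx) (lt_asymm (pos_of_mem_Ioi_smul hφ hP))
  · exact hN

theorem image_Ioi_smul_eq_or_eq_neg {F : Type*} [FunLike F E E] [LinearMapClass F ℝ E E]
    [ContinuousMapClass F E E] {C : Set E} {φ : E →ₗ[ℝ] ℝ} (hφc : Continuous φ)
    (hφ : ∀ v ∈ C, φ v = 1) (hC : IsPreconnected C) (f : F)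
    (hf : f '' (Ioi (0 : ℝ) • C ∪ -(Ioi (0 : ℝ) • C)) = Ioi (0 : ℝ) • C ∪ -(Ioi (0 : ℝ) • C)) :
    f '' (Ioi (0 : ℝ) • C) = Ioi (0 : ℝ) • C ∨ f '' (Ioi (0 : ℝ) • C) = -(Ioi (0 : ℝ) • C) := by
  have hdisj : Disjoint (Ioi (0 : ℝ) • C) (-(Ioi (0 : ℝ) • C)) :=
    disjoint_left.2 fun _ hP hN =>
      lt_asymm (pos_of_mem_Ioi_smul hφ hP) (neg_of_mem_neg_Ioi_smul hφ hN)
  have hfC : f '' C ⊆ Ioi (0 : ℝ) • C ∪ -(Ioi (0 : ℝ) • C) :=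
    hf ▸ image_mono fun v hv => Or.inl ⟨1, mem_Ioi.2 one_pos, v, hv, one_smul ℝ v⟩
  rcases subset_or_subset_neg_of_subset_union_neg hφc hφ
    (hC.image f (map_continuous f).continuousOn) hfC with hpos | hneg
  · exact .inl <| image_eq_of_image_union_neg_eq hdisj f hf (image_Ioi_smul_subset f hpos)
  · refine .inr <| image_eq_of_image_union_neg_eq (Q := -(Ioi (0 : ℝ) • C))
      (by rwa [neg_neg, disjoint_comm]) f (by rw [neg_neg, hf, union_comm]) ?_
    rw [← Set.smul_neg] at hneg ⊢
    exact image_Ioi_smul_subset f hneg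

theorem image_interior_convexHull_eq_or_eq_neg [IsTopologicalAddGroup E] {C : Set E}
    {φ : E →ₗ[ℝ] ℝ} (hφc : Continuous φ) (hφ : ∀ v ∈ C, φ v = 1) (hC : IsPreconnected C) (f : E ≃L[ℝ] E)
    (hf : f '' (Ioi (0 : ℝ) • C ∪ -(Ioi (0 : ℝ) • C)) = Ioi (0 : ℝ) • C ∪ -(Ioi (0 : ℝ) • C)) :
    f '' interior (convexHull ℝ (Ioi (0 : ℝ) • C)) = interior (convexHull ℝ (Ioi (0 : ℝ) • C)) ∨
      f '' interior (convexHull ℝ (Ioi (0 : ℝ) • C)) =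
        -interior (convexHull ℝ (Ioi (0 : ℝ) • C)) := by
  have hint : ∀ s : Set E, f '' interior (convexHull ℝ s) = interior (convexHull ℝ (f '' s)) :=
    fun s => by
      rw [← (IsLinearMap.mk (map_add f) (map_smul f)).image_convexHull]
      exact f.toHomeomorph.image_interior _
  rw [hint]
  rcases image_Ioi_smul_eq_or_eq_neg hφc hφ hC f hf with h | h
  · exact .inl (by rw [h])
  · exact .inr (by rw [h, convexHull_neg, interior_neg])

end TopologicalVectorSpace

section Normed

variable {E : Type*} [NormedAddCommGroup E] [NormedSpace ℝ E]

theorem interior_convexHull_Ioi_smul_nonempty [FiniteDimensional ℝ E] {C : Set E}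
    (hne : C.Nonempty) (hC : Submodule.span ℝ C = ⊤) :
    (interior (convexHull ℝ (Ioi (0 : ℝ) • C))).Nonempty := by
  rw [interior_convexHull_nonempty_iff_affineSpan_eq_top,
    AffineSubspace.affineSpan_eq_top_iff_vectorSpan_eq_top_of_nonempty ℝ _ _
      (nonempty_Ioi.smul hne)]
  exact vectorSpan_Ioi_smul_eq_top hC

theorem convex_setOf_norm_le_mul (φ : E →ₗ[ℝ] ℝ) (M : ℝ) : Convex ℝ {x : E | ‖x‖ ≤ M * φ x} := by
  intro x (hx : ‖x‖ ≤ M * φ x) y (hy : ‖y‖ ≤ M * φ y) a b ha hb hab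
  calc ‖a • x + b • y‖ ≤ a * ‖x‖ + b * ‖y‖ := by
        simpa [norm_smul, abs_of_nonneg ha, abs_of_nonneg hb] using norm_add_le (a • x) (b • y)
    _ ≤ a * (M * φ x) + b * (M * φ y) := by gcongr
    _ = M * φ (a • x + b • y) := by simp only [map_add, map_smul, smul_eq_mul]; ring

theorem norm_le_mul_of_mem_closure_convexHull {C : Set E} {φ : E →ₗ[ℝ] ℝ} (hφc : Continuous φ)
    (hφ : ∀ v ∈ C, φ v = 1) {M : ℝ} (hM : ∀ v ∈ C, ‖v‖ ≤ M) {x : E}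
    (hx : x ∈ closure (convexHull ℝ (Ioi (0 : ℝ) • C))) : ‖x‖ ≤ M * φ x := by
  refine closure_minimal (convexHull_min ?_ (convex_setOf_norm_le_mul φ M))
    (isClosed_le continuous_norm (continuous_const.mul hφc)) hx
  rintro _ ⟨t, ht, v, hv, rfl⟩
  show ‖t • v‖ ≤ M * φ (t • v)
  rw [norm_smul, map_smul, hφ v hv, smul_eq_mul, mul_one, Real.norm_of_nonneg ht.le, mul_comm]
  exact mul_le_mul_of_nonneg_right (hM v hv) ht.le

theorem zero_mem_closure_of_forall_smul_eq {Ω : Set E} (hne : Ω.Nonempty)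
    (hΩ : ∀ t : ℝ, 0 < t → t • Ω = Ω) : (0 : E) ∈ closure Ω := by
  obtain ⟨x, hx⟩ := hne
  have hlim : Tendsto (fun t : ℝ => t • x) (𝓝[>] 0) (𝓝 0) := by
    simpa using (tendsto_id.smul_const x).mono_left (nhdsWithin_le_nhds (a := (0 : ℝ)))
  exact mem_closure_of_tendsto hlim
    (eventually_nhdsWithin_of_forall fun t ht => hΩ t ht ▸ smul_mem_smul_set hx)

theorem closure_inter_neg_closure_eq_zero {Ω : Set E} {φ : E →ₗ[ℝ] ℝ} {M : ℝ} (hne : Ω.Nonempty)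
    (hΩ : ∀ t : ℝ, 0 < t → t • Ω = Ω) (hM : ∀ x ∈ closure Ω, ‖x‖ ≤ M * φ x) :
    closure Ω ∩ -closure Ω = {0} := by
  have h0 := zero_mem_closure_of_forall_smul_eq hne hΩ
  refine Subset.antisymm (fun x ⟨hx, hnx⟩ => ?_) (singleton_subset_iff.2 ⟨h0, by simpa using h0⟩)
  have h₁ := hM x hx
  have h₂ := hM (-x) hnx
  rw [norm_neg, map_neg] at h₂
  exact norm_le_zero_iff.1 (by linarith)

end Normed

theorem scalarSaturation_eq {d : ℕ} (C : Set (Fin d → ℝ)) :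
    scalarSaturation C = Ioi (0 : ℝ) • C ∪ -(Ioi (0 : ℝ) • C) := by
  ext w
  constructor
  · rintro ⟨t, ht, v, hv, rfl⟩
    rcases ht.lt_or_gt with hneg | hpos
    · exact .inr ⟨-t, neg_pos.2 hneg, v, hv, neg_smul t v⟩
    · exact .inl ⟨t, hpos, v, hv, rfl⟩
  · rintro (⟨t, ht, v, hv, rfl⟩ | ⟨t, ht, v, hv, hw⟩)
    · exact ⟨t, (ne_of_lt ht).symm, v, hv, rfl⟩
    · exact ⟨-t, neg_ne_zero.2 (ne_of_lt ht).symm, v, hv,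
        by rw [neg_smul]; exact neg_eq_iff_eq_neg.1 hw.symm⟩

/-- **Remark (groups preserving a spanning compact connected set in an affine chart
preserve a properly convex domain).**
If a subgroup `G ≤ GL_d(ℝ)` projectively preserves a compact connected set `C` spanning
`ℝ^d` and contained in the affine chart `{φ = 1}`, then `G` preserves a properly convex open
cone, hence a properly convex domain in `ℙ(ℝ^d)`. -/
theorem preserves_properly_convex_domain_of_preserves_compact_connected_spanning
    {d : ℕ} (G : Subgroup (GL (Fin d) ℝ))
    (C : Set (Fin d → ℝ)) (hCcpt : IsCompact C) (hCconn : IsConnected C)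
    (hspan : Submodule.span ℝ C = ⊤)
    (φ : (Fin d → ℝ) →ₗ[ℝ] ℝ) (hchart : ∀ v ∈ C, φ v = 1)
    (hpres : ∀ g ∈ G,
      (fun v => (g : Matrix (Fin d) (Fin d) ℝ) *ᵥ v) '' scalarSaturation C =
        scalarSaturation C) :
    ∃ Ω : Set (Fin d → ℝ), Ω.Nonempty ∧ IsOpen Ω ∧ Convex ℝ Ω ∧
      (∀ t : ℝ, 0 < t → t • Ω = Ω) ∧
      (closure Ω ∩ (-closure Ω) = {0}) ∧
      ∀ g ∈ G,
        ((fun v => (g : Matrix (Fin d) (Fin d) ℝ) *ᵥ v) '' Ω = Ω ∨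
         (fun v => (g : Matrix (Fin d) (Fin d) ℝ) *ᵥ v) '' Ω = -Ω) := by
  obtain ⟨M, hM⟩ := hCcpt.isBounded.exists_norm_le
  have hφc : Continuous φ := φ.continuous_of_finiteDimensional
  set Ω := interior (convexHull ℝ (Ioi (0 : ℝ) • C))
  have hne : Ω.Nonempty := interior_convexHull_Ioi_smul_nonempty hCconn.nonempty hspan
  have hsmul : ∀ t : ℝ, 0 < t → t • Ω = Ω := fun t ht => by
    rw [← interior_smul₀ ht.ne', ← convexHull_smul, smul_Ioi_smul_eq ht]
  refine ⟨Ω, hne, isOpen_interior, (convex_convexHull ℝ _).interior, hsmul,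
    closure_inter_neg_closure_eq_zero hne hsmul fun x hx =>
      norm_le_mul_of_mem_closure_convexHull hφc hchart hM (closure_mono interior_subset hx),
    fun g hg => ?_⟩
  let e : (Fin d → ℝ) ≃L[ℝ] (Fin d → ℝ) := (LinearMap.GeneralLinearGroup.generalLinearEquiv ℝ _
    (Matrix.GeneralLinearGroup.toLin g)).toContinuousLinearEquiv
  exact image_interior_convexHull_eq_or_eq_neg hφc hchart hCconn.isPreconnected e
    (by rw [← scalarSaturation_eq]; exact hpres g hg)
end
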